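/- arXiv:1608.04672 — 2 statements merged into one kernel-verified Lean document; each statement's English description precedes it below -/
import Mathlib

section
/- The set Tot of codes of total partial computable functions is not recursively enumerable: there is no total computable function f : ℕ → ℕ whose range equals { c | eval c n is defined for every n }. -/
/-
Cantor's diagonal argument: if a computable `f` listed exactly the total codes, then
`n ↦ evalN (f n) n + 1` would be a total computable function, hence computed by some
`f m`, and at input `m` it would differ from itself.
-/

/-- The partial computable function computed by the Gödel number `c`. -/
def evalN (c : ℕ) : ℕ →. ℕ :=
  Nat.Partrec.Code.eval (Denumerable.ofNat Nat.Partrec.Code c)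

open Nat.Partrec

theorem Part.map_ne_self {α : Type*} {f : α → α} (hf : ∀ a, f a ≠ a) {p : Part α}
    (h : p.Dom) : p.map f ≠ p := by
  intro heq
  have hmem : p.get h ∈ p := Part.get_mem h
  have hfmem : f (p.get h) ∈ p.map f := Part.mem_map f hmem
  rw [heq] at hfmem
  exact hf _ (Part.mem_unique hfmem hmem)

theorem partrec₂_evalN : Partrec₂ evalN :=
  Code.eval_part.comp ((Computable.ofNat Code).comp Computable.fst) Computable.snd

theorem exists_evalN_eq_of_partrec {g : ℕ →. ℕ} (hg : Partrec g) : ∃ c, evalN c = g := by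
  obtain ⟨c, hc⟩ := Code.exists_code.mp (Partrec.nat_iff.mp hg)
  exact ⟨Encodable.encode c, by rw [evalN, Denumerable.ofNat_encode, hc]⟩

theorem exists_total_code_not_mem_range {f : ℕ → ℕ} (hf : Computable f)
    (htot : ∀ n, (evalN (f n) n).Dom) :
    ∃ c, (∀ n, (evalN c n).Dom) ∧ c ∉ Set.range f := by
  have hdiag : Partrec fun n => (evalN (f n) n).map Nat.succ :=
    (partrec₂_evalN.comp hf Computable.id).map (Computable.succ.comp Computable.snd).to₂
  obtain ⟨c, hc⟩ := exists_evalN_eq_of_partrec hdiag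
  refine ⟨c, fun n => by rw [hc]; exact htot n, ?_⟩
  rintro ⟨m, rfl⟩
  exact Part.map_ne_self Nat.succ_ne_self (htot m) (congrFun hc m).symm

/-- The set `Tot` of codes of total partial computable functions is not
recursively enumerable: no total computable function has range `Tot`. -/
theorem stmt1 :
    ¬ ∃ f : ℕ → ℕ, Computable f ∧
      Set.range f = {c : ℕ | ∀ n, (evalN c n).Dom} := by
  rintro ⟨f, hf, hrange⟩
  have htot : ∀ n, (evalN (f n) n).Dom := fun n =>
    (hrange ▸ Set.mem_range_self n : f n ∈ {c : ℕ | ∀ n, (evalN c n).Dom}) n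
  obtain ⟨c, hc_tot, hc_not_mem⟩ := exists_total_code_not_mem_range hf htot
  exact hc_not_mem (hrange ▸ hc_tot)
end

section
/- Every nonempty set A ⊆ ℕ admitting a productive function contains an infinite recursively enumerable subset: if A is nonempty and there is a partial computable ψ productive for A, then there exists a total computable function f : ℕ → ℕ whose range is an infinite subset of A. (The function is obtained by starting from a constant function into A and repeatedly applying the effective extension by ψ; the successively adjoined elements ψ-values are pairwise distinct.) -/
/-- `ψ` is a productive function for `A`. -/
def Productive (ψ : ℕ →. ℕ) (A : Set ℕ) : Prop :=
  ∀ i : ℕ, (∀ n, (evalN i n).Dom) → (∀ n m, m ∈ evalN i n → m ∈ A) →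
    ∃ y ∈ ψ i, y ∈ A ∧ ∀ n, y ∉ evalN i n

/-!
Start from a code `c₀` of the constant function with value `a ∈ A` and iterate the computable
map `g` (from the s-m-n theorem) sending a code `c` to a code enumerating `ψ c` followed by the
values of `evalN c`. Productivity keeps every code `g^[k] c₀` total with values in `A`, so
`k ↦ ψ (g^[k] c₀)` is a total computable function into `A`; it is injective because
`ψ (g^[k] c₀)` avoids the values of `g^[k] c₀`, which include all earlier `ψ (g^[j] c₀)`.
-/

open Nat.Partrec (Code)

theorem Computable.nat_iterate {α β : Type*} [Primcodable α] [Primcodable β]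
    {f : α → ℕ} {g : α → β} {h : α → β → β} (hf : Computable f) (hg : Computable g)
    (hh : Computable₂ h) : Computable fun a => (h a)^[f a] (g a) :=
  (Computable.nat_rec hf hg
    (hh.comp Computable.fst (Computable.snd.comp Computable.snd)).to₂).of_eq fun a => by
      induction f a <;> simp [*, -Function.iterate_succ, Function.iterate_succ']

theorem exists_computable_evalN_eq {F : ℕ → ℕ →. ℕ} (hF : Partrec₂ F) :
    ∃ g : ℕ → ℕ, Computable g ∧ ∀ c n, evalN (g c) n = F c n := by
  obtain ⟨e, he⟩ := Code.exists_code.1 <| Partrec.nat_iff.1 <|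
    hF.comp (Computable.fst.comp Computable.unpair) (Computable.snd.comp Computable.unpair)
  refine ⟨fun c => Encodable.encode (e.curry c),
    (Primrec.encode.comp <| Code.primrec₂_curry.comp (Primrec.const e) Primrec.id).to_comp, ?_⟩
  intro c n
  simp [evalN, Code.eval_curry, he]

theorem evalN_encode_const (a n : ℕ) :
    evalN (Encodable.encode (Code.const a)) n = Part.some a := by
  simp [evalN, Code.eval_const]

def IsEffectiveExtension (ψ : ℕ →. ℕ) (g : ℕ → ℕ) : Prop :=
  ∀ c, evalN (g c) 0 = ψ c ∧ ∀ n, evalN (g c) (n + 1) = evalN c n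

theorem exists_computable_isEffectiveExtension {ψ : ℕ →. ℕ} (hψ : Partrec ψ) :
    ∃ g : ℕ → ℕ, Computable g ∧ IsEffectiveExtension ψ g := by
  have hF : Partrec₂ fun c n => bif n == 0 then ψ c else evalN c (n - 1) :=
    Partrec.cond (Primrec.beq.comp Primrec.snd (Primrec.const 0)).to_comp
      (hψ.comp Computable.fst)
      (Code.eval_part.comp ((Computable.ofNat Code).comp Computable.fst)
        (Primrec.pred.comp Primrec.snd).to_comp)
  obtain ⟨g, hg, hgF⟩ := exists_computable_evalN_eq hF
  exact ⟨g, hg, fun c => ⟨by simp [hgF], fun n => by simp [hgF]⟩⟩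

def TotalInto (A : Set ℕ) (i : ℕ) : Prop :=
  (∀ n, (evalN i n).Dom) ∧ ∀ n m, m ∈ evalN i n → m ∈ A

theorem totalInto_encode_const {A : Set ℕ} {a : ℕ} (ha : a ∈ A) :
    TotalInto A (Encodable.encode (Code.const a)) := by
  refine ⟨fun n => ?_, fun n m hm => ?_⟩
  · simp [evalN_encode_const]
  · rw [evalN_encode_const, Part.mem_some_iff] at hm
    exact hm ▸ ha

namespace IsEffectiveExtension

variable {ψ : ℕ →. ℕ} {g : ℕ → ℕ} {A : Set ℕ} {c : ℕ}

theorem totalInto_apply (hg : IsEffectiveExtension ψ g) (hprod : Productive ψ A)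
    (hc : TotalInto A c) : TotalInto A (g c) := by
  obtain ⟨y, hy, hyA, -⟩ := hprod c hc.1 hc.2
  refine ⟨fun n => ?_, fun n m hm => ?_⟩
  · cases n with
    | zero => rw [(hg c).1]; exact Part.dom_iff_mem.2 ⟨y, hy⟩
    | succ n => rw [(hg c).2]; exact hc.1 n
  · cases n with
    | zero => rw [(hg c).1] at hm; rwa [Part.mem_unique hm hy]
    | succ n => rw [(hg c).2] at hm; exact hc.2 n m hm

theorem totalInto_iterate (hg : IsEffectiveExtension ψ g) (hprod : Productive ψ A)
    (hc : TotalInto A c) (k : ℕ) : TotalInto A (g^[k] c) := by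
  induction k with
  | zero => exact hc
  | succ k ih => rw [Function.iterate_succ_apply']; exact hg.totalInto_apply hprod ih

theorem exists_mem_evalN_iterate (hg : IsEffectiveExtension ψ g) {j k y : ℕ} (hjk : j < k)
    (hy : y ∈ ψ (g^[j] c)) : ∃ n, y ∈ evalN (g^[k] c) n := by
  induction k, hjk using Nat.le_induction with
  | base => exact ⟨0, by rwa [Function.iterate_succ_apply', (hg _).1]⟩
  | succ k _ ih =>
    obtain ⟨n, hn⟩ := ih
    exact ⟨n + 1, by rwa [Function.iterate_succ_apply', (hg _).2]⟩

theorem injective_of_mem_iterate (hg : IsEffectiveExtension ψ g) (hprod : Productive ψ A)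
    (hc : TotalInto A c) {f : ℕ → ℕ} (hf : ∀ k, f k ∈ ψ (g^[k] c)) :
    Function.Injective f := by
  refine .of_lt_imp_ne fun j k hjk hfjk => ?_
  have hk := hg.totalInto_iterate hprod hc k
  obtain ⟨y, hy, -, hynew⟩ := hprod _ hk.1 hk.2
  obtain ⟨n, hn⟩ := hg.exists_mem_evalN_iterate hjk (hf j)
  rw [hfjk, Part.mem_unique (hf k) hy] at hn
  exact hynew n hn

end IsEffectiveExtension

/-- Every nonempty set with a partial computable productive function contains
an infinite recursively enumerable subset. -/
theorem stmt7 (A : Set ℕ) (hA : A.Nonempty) (ψ : ℕ →. ℕ) (hψ : Partrec ψ)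
    (hprod : Productive ψ A) :
    ∃ f : ℕ → ℕ, Computable f ∧ Set.range f ⊆ A ∧ (Set.range f).Infinite := by
  obtain ⟨a, ha⟩ := hA
  obtain ⟨g, hg_comp, hg⟩ := exists_computable_isEffectiveExtension hψ
  set c₀ := Encodable.encode (Code.const a)
  have h₀ : TotalInto A c₀ := totalInto_encode_const ha
  have hψ_mem (k : ℕ) : ∃ y ∈ ψ (g^[k] c₀), y ∈ A := by
    have hk := hg.totalInto_iterate hprod h₀ k
    obtain ⟨y, hy, hyA, -⟩ := hprod _ hk.1 hk.2
    exact ⟨y, hy, hyA⟩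
  choose f hfψ hfA using hψ_mem
  have hcodes : Computable fun k => g^[k] c₀ :=
    .nat_iterate .id (.const c₀) (hg_comp.comp Computable.snd).to₂
  refine ⟨f, (hψ.comp hcodes).of_eq_tot hfψ, Set.range_subset_iff.2 hfA, ?_⟩
  exact Set.infinite_range_of_injective (hg.injective_of_mem_iterate hprod h₀ hfψ)
end
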